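/- Let Θ ∈ ℝ^{d×d} be symmetric with zero row sums and let the m-th principal deletion Θ_{−m,−m} be invertible for some m ∈ {1,…,d}. Define Γ ∈ ℝ^{d×d} by Γ_{jk} := Σ'_{j'j'} + Σ'_{k'k'} − 2Σ'_{j'k'} where Σ' := (Θ_{−m,−m})^{-1} (with the convention that rows/columns indexed by m correspond to zero, i.e., Σ'_{m·} := 0). Then Γ does not depend on the choice of m. -/
import Mathlib


open Matrix BigOperators Classical

namespace Stmt18

variable {n : ℕ}

/-- The inverse of the `m`-deleted matrix, extended by zero to a full
`d × d` matrix (rows and columns indexed by `m` are zero). -/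
noncomputable def Sfull (Θ : Matrix (Fin (n + 1)) (Fin (n + 1)) ℝ)
    (m : Fin (n + 1)) : Matrix (Fin (n + 1)) (Fin (n + 1)) ℝ :=
  Matrix.of fun i j =>
    ∑ k : Fin n, ∑ l : Fin n,
      if m.succAbove k = i ∧ m.succAbove l = j then
        (Θ.submatrix m.succAbove m.succAbove)⁻¹ k l
      else 0

/-- The variogram recovered from `Θ` with anchor `m`:
`Γ_{jk} = Σ'_{j'j'} + Σ'_{k'k'} − 2Σ'_{j'k'}` with `Σ' = (Θ_{-m,-m})⁻¹`
extended by zero. -/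
noncomputable def vario (Θ : Matrix (Fin (n + 1)) (Fin (n + 1)) ℝ)
    (m : Fin (n + 1)) : Matrix (Fin (n + 1)) (Fin (n + 1)) ℝ :=
  Matrix.of fun i j =>
    Sfull Θ m i i + Sfull Θ m j j - 2 * Sfull Θ m i j

lemma Sfull_apply (Θ : Matrix (Fin (n+1)) (Fin (n+1)) ℝ) (m : Fin (n+1)) (k l : Fin n) :
    Sfull Θ m (m.succAbove k) (m.succAbove l) = (Θ.submatrix m.succAbove m.succAbove)⁻¹ k l := by
  unfold Sfull
  simp [Fin.succAbove_right_inj, ite_and, Finset.sum_ite_eq']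

lemma Sfull_left (Θ : Matrix (Fin (n+1)) (Fin (n+1)) ℝ) (m : Fin (n+1)) (j : Fin (n+1)) :
    Sfull Θ m m j = 0 := by
  unfold Sfull
  simp [fun k => (Fin.succAbove_ne m k : m.succAbove k ≠ m)]

lemma Sfull_right (Θ : Matrix (Fin (n+1)) (Fin (n+1)) ℝ) (m : Fin (n+1)) (i : Fin (n+1)) :
    Sfull Θ m i m = 0 := by
  unfold Sfull
  simp [fun k => (Fin.succAbove_ne m k : m.succAbove k ≠ m)]


lemma Sfull_symm (Θ : Matrix (Fin (n+1)) (Fin (n+1)) ℝ) (hsym : Θ.IsSymm) (m : Fin (n+1))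
    (i j : Fin (n+1)) : Sfull Θ m i j = Sfull Θ m j i := by
  have hA : (Θ.submatrix m.succAbove m.succAbove)ᵀ = Θ.submatrix m.succAbove m.succAbove := by
    ext k l
    simp [Matrix.transpose_apply, Matrix.submatrix_apply, hsym.apply]
  have hAi : ∀ k l : Fin n, (Θ.submatrix m.succAbove m.succAbove)⁻¹ k l
      = (Θ.submatrix m.succAbove m.succAbove)⁻¹ l k := by
    intro k l
    have : ((Θ.submatrix m.succAbove m.succAbove)⁻¹)ᵀ = (Θ.submatrix m.succAbove m.succAbove)⁻¹ := by
      rw [Matrix.transpose_nonsing_inv, hA]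
    simpa using congrFun (congrFun this l) k
  unfold Sfull
  simp only [Matrix.of_apply]
  rw [Finset.sum_comm]
  apply Finset.sum_congr rfl; intro l _
  apply Finset.sum_congr rfl; intro k _
  rw [hAi]
  exact if_congr and_comm rfl rfl


lemma col_sum (Θ : Matrix (Fin (n+1)) (Fin (n+1)) ℝ) (hsym : Θ.IsSymm)
    (hrow : Θ *ᵥ (fun _ => 1) = 0) (c : Fin (n+1)) : ∑ a, Θ a c = 0 := by
  have h := congrFun hrow c
  simp only [Matrix.mulVec, dotProduct, mul_one, Pi.zero_apply] at h
  calc ∑ a, Θ a c = ∑ a, Θ c a := by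
        apply Finset.sum_congr rfl; intro a _; exact (hsym.apply a c).symm ▸ rfl
    _ = 0 := h

lemma theta_mul_Sfull (Θ : Matrix (Fin (n+1)) (Fin (n+1)) ℝ) (hsym : Θ.IsSymm)
    (hrow : Θ *ᵥ (fun _ => 1) = 0) (m : Fin (n+1))
    (h : IsUnit (Θ.submatrix m.succAbove m.succAbove).det) :
    Θ * Sfull Θ m = 1 - Matrix.of (fun i _ => if i = m then (1:ℝ) else 0) := by
  set A := Θ.submatrix m.succAbove m.succAbove with hA
  have hAinv : A * A⁻¹ = 1 := Matrix.mul_nonsing_inv A h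
  ext i j
  rw [Matrix.mul_apply]
  rw [Fin.sum_univ_succAbove (fun c => Θ i c * Sfull Θ m c j) m]
  rw [Sfull_left, mul_zero, zero_add]
  rcases eq_or_ne j m with rfl | hj
  · simp [Sfull_right, Matrix.one_apply]
  · obtain ⟨l, rfl⟩ := Fin.exists_succAbove_eq hj
    simp only [Sfull_apply, ← hA]
    rcases eq_or_ne i m with hi | hi
    · rw [hi]
      have hcol : ∀ k : Fin n, Θ m (m.succAbove k) = -∑ r, Θ (m.succAbove r) (m.succAbove k) := by
        intro k
        have h0 := col_sum Θ hsym hrow (m.succAbove k)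
        rw [Fin.sum_univ_succAbove (fun a => Θ a (m.succAbove k)) m] at h0
        linarith
      have : ∑ k, Θ m (m.succAbove k) * A⁻¹ k l
          = -∑ r, ∑ k, A r k * A⁻¹ k l := by
        have step : ∀ k, Θ m (m.succAbove k) * A⁻¹ k l = -(∑ r, A r k * A⁻¹ k l) := by
          intro k
          rw [hcol k, neg_mul, Finset.sum_mul]
          rfl
        simp only [step]
        rw [Finset.sum_neg_distrib, Finset.sum_comm]
      rw [this]
      have : ∀ r, ∑ k, A r k * A⁻¹ k l = (1 : Matrix (Fin n) (Fin n) ℝ) r l := by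
        intro r; rw [← Matrix.mul_apply, hAinv]
      simp only [this]
      have hne : m ≠ m.succAbove l := (Fin.succAbove_ne m l).symm
      simp [Matrix.one_apply, hne, Finset.sum_ite_eq']
    · obtain ⟨r, rfl⟩ := Fin.exists_succAbove_eq hi
      have : ∑ k, Θ (m.succAbove r) (m.succAbove k) * A⁻¹ k l
          = (1 : Matrix (Fin n) (Fin n) ℝ) r l := by
        rw [← hAinv, Matrix.mul_apply]
        apply Finset.sum_congr rfl; intro k _
        simp [hA, Matrix.submatrix_apply]
      rw [this]
      simp [Matrix.one_apply, Fin.succAbove_right_inj, Fin.succAbove_ne]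


lemma quad_anchor_free (Θ : Matrix (Fin (n+1)) (Fin (n+1)) ℝ) (hsym : Θ.IsSymm)
    (hrow : Θ *ᵥ (fun _ => 1) = 0) (m₁ m₂ : Fin (n+1))
    (h₁ : IsUnit (Θ.submatrix m₁.succAbove m₁.succAbove).det)
    (h₂ : IsUnit (Θ.submatrix m₂.succAbove m₂.succAbove).det)
    (x : Fin (n+1) → ℝ) (hx : ∑ t, x t = 0) :
    x ⬝ᵥ (Sfull Θ m₁ *ᵥ x) = x ⬝ᵥ (Sfull Θ m₂ *ᵥ x) := by
  have key1 := theta_mul_Sfull Θ hsym hrow m₁ h₁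
  have key2 := theta_mul_Sfull Θ hsym hrow m₂ h₂
  -- x is recovered by Θ * S₂
  have hxrec : Θ *ᵥ (Sfull Θ m₂ *ᵥ x) = x := by
    rw [Matrix.mulVec_mulVec, key2]
    ext i
    simp only [Matrix.sub_mulVec, Matrix.one_mulVec, Pi.sub_apply]
    have : (Matrix.of (fun i _ => if i = m₂ then (1:ℝ) else 0)) *ᵥ x = fun i => if i = m₂ then ∑ t, x t else 0 := by
      ext i
      by_cases h : i = m₂ <;> simp [Matrix.mulVec, dotProduct, ite_mul, h]
    rw [this]
    simp [hx]
  -- S₁ * Θ = 1 - (E m₁)ᵀ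
  have hS1T : Sfull Θ m₁ * Θ = 1 - (Matrix.of (fun i _ => if i = m₁ then (1:ℝ) else 0))ᵀ := by
    have hS1sym : (Sfull Θ m₁)ᵀ = Sfull Θ m₁ := by
      ext a b; exact Sfull_symm Θ hsym m₁ b a
    calc Sfull Θ m₁ * Θ = (Θ * Sfull Θ m₁)ᵀ := by
          rw [Matrix.transpose_mul, hS1sym, hsym.eq]
      _ = 1 - (Matrix.of (fun i _ => if i = m₁ then (1:ℝ) else 0))ᵀ := by
          rw [key1, Matrix.transpose_sub, Matrix.transpose_one]
  calc x ⬝ᵥ (Sfull Θ m₁ *ᵥ x)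
      = x ⬝ᵥ (Sfull Θ m₁ *ᵥ (Θ *ᵥ (Sfull Θ m₂ *ᵥ x))) := by rw [hxrec]
    _ = x ⬝ᵥ ((Sfull Θ m₁ * Θ) *ᵥ (Sfull Θ m₂ *ᵥ x)) := by rw [Matrix.mulVec_mulVec]
    _ = x ⬝ᵥ (Sfull Θ m₂ *ᵥ x) := by
        rw [hS1T, Matrix.sub_mulVec, Matrix.one_mulVec, dotProduct_sub]
        have : x ⬝ᵥ (((Matrix.of (fun i _ => if i = m₁ then (1:ℝ) else 0) : Matrix (Fin (n+1)) (Fin (n+1)) ℝ))ᵀ *ᵥ (Sfull Θ m₂ *ᵥ x)) = 0 := by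
          have hE : ((Matrix.of (fun i _ => if i = m₁ then (1:ℝ) else 0) : Matrix (Fin (n+1)) (Fin (n+1)) ℝ))ᵀ *ᵥ (Sfull Θ m₂ *ᵥ x)
              = fun _ => (Sfull Θ m₂ *ᵥ x) m₁ := by
            ext i
            simp [Matrix.mulVec, dotProduct, Matrix.transpose_apply, ite_mul]
          rw [hE]
          simp [dotProduct, ← Finset.sum_mul, hx]
        rw [this, sub_zero]

lemma quad_form (Θ : Matrix (Fin (n+1)) (Fin (n+1)) ℝ) (hsym : Θ.IsSymm)
    (m : Fin (n+1)) (i j : Fin (n+1)) :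
    (fun t => (if t = i then (1:ℝ) else 0) - (if t = j then 1 else 0)) ⬝ᵥ
      (Sfull Θ m *ᵥ (fun t => (if t = i then (1:ℝ) else 0) - (if t = j then 1 else 0)))
    = Sfull Θ m i i + Sfull Θ m j j - 2 * Sfull Θ m i j := by
  have hs := Sfull_symm Θ hsym m j i
  simp [dotProduct, Matrix.mulVec, mul_sub, sub_mul, Finset.sum_sub_distrib,
    mul_ite, ite_mul, Finset.sum_ite_eq, Finset.sum_ite_eq']
  rw [hs]; ring

theorem stmt_18' (Θ : Matrix (Fin (n + 1)) (Fin (n + 1)) ℝ)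
    (hsym : Θ.IsSymm) (hrow : Θ *ᵥ (fun _ => 1) = 0)
    (m₁ m₂ : Fin (n + 1))
    (h₁ : IsUnit (Θ.submatrix m₁.succAbove m₁.succAbove).det)
    (h₂ : IsUnit (Θ.submatrix m₂.succAbove m₂.succAbove).det) :
    (Matrix.of fun i j => Sfull Θ m₁ i i + Sfull Θ m₁ j j - 2 * Sfull Θ m₁ i j)
    = (Matrix.of fun i j => Sfull Θ m₂ i i + Sfull Θ m₂ j j - 2 * Sfull Θ m₂ i j) := by
  ext i j
  have hx : ∑ t, ((if t = i then (1:ℝ) else 0) - (if t = j then 1 else 0)) = 0 := by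
    simp [Finset.sum_sub_distrib, Finset.sum_ite_eq']
  have := quad_anchor_free Θ hsym hrow m₁ m₂ h₁ h₂ _ hx
  rw [quad_form Θ hsym m₁ i j, quad_form Θ hsym m₂ i j] at this
  simpa using this

/-- the variogram recovered from a symmetric zero-row-sum matrix
`Θ` does not depend on the anchor index `m` (among anchors whose deleted
submatrix is invertible). -/
theorem stmt_18 (Θ : Matrix (Fin (n + 1)) (Fin (n + 1)) ℝ)
    (hsym : Θ.IsSymm) (hrow : Θ *ᵥ (fun _ => 1) = 0)
    (m₁ m₂ : Fin (n + 1))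
    (h₁ : IsUnit (Θ.submatrix m₁.succAbove m₁.succAbove).det)
    (h₂ : IsUnit (Θ.submatrix m₂.succAbove m₂.succAbove).det) :
    vario Θ m₁ = vario Θ m₂ := by
  exact stmt_18' Θ hsym hrow m₁ m₂ h₁ h₂

end Stmt18
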